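/- arXiv:2412.09698 — 4 statements merged into one kernel-verified Lean document; each statement's English description precedes it below -/
import Mathlib

section
/- Let V : ℝ^d → ℝ be convex, differentiable, λ-strongly convex outside a ball centered at 0, and attain its minimum at 0. Then for any τ > 0 and x ∈ ℝ^d, (1 + τλ·𝟙_{ℝ^d∖B}(prox_V^τ(x)))·|prox_V^τ(x)|² ≤ |x|². -/
open scoped RealInnerProductSpace Classical

/-- If `V` is convex, differentiable, λ-strongly convex outside the ball `B(0,R)` and attains its
minimum at `0`, then `(1 + τλ·𝟙_{ℝ^d∖B}(prox_V^τ(x)))·|prox_V^τ(x)|² ≤ |x|²`. -/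
theorem prox_contraction_toward_zero (d : ℕ)
    (V : EuclideanSpace ℝ (Fin d) → ℝ)
    (V' : EuclideanSpace ℝ (Fin d) → EuclideanSpace ℝ (Fin d)) (lam : ℝ) (hlam : 0 ≤ lam)
    (R : ℝ)
    (hdiff : ∀ x, HasGradientAt V (V' x) x)
    (hconv : ConvexOn ℝ Set.univ V)
    (hconvOut : ∀ x y, V x ≥ V y + ⟪V' y, x - y⟫ +
      lam / 2 * (if y ∈ Metric.ball (0 : EuclideanSpace ℝ (Fin d)) R then (0 : ℝ) else 1) *
        ‖x - y‖ ^ 2)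
    (hminV : ∀ y, V 0 ≤ V y)
    (τ : ℝ) (hτ : 0 < τ) (x p : EuclideanSpace ℝ (Fin d))
    (hmin : ∀ y, V p + ‖p - x‖ ^ 2 / (2 * τ) ≤ V y + ‖y - x‖ ^ 2 / (2 * τ)) :
    (1 + τ * lam * (if p ∈ Metric.ball (0 : EuclideanSpace ℝ (Fin d)) R then (0 : ℝ) else 1)) *
      ‖p‖ ^ 2 ≤ ‖x‖ ^ 2 := by
  set χ : ℝ := (if p ∈ Metric.ball (0 : EuclideanSpace ℝ (Fin d)) R then (0 : ℝ) else 1) with hχ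
  have hχ0 : 0 ≤ χ := by rw [hχ]; split <;> norm_num
  -- derivative of the objective at p
  have h1 : HasFDerivAt V (InnerProductSpace.toDual ℝ _ (V' p)) p := (hdiff p).hasFDerivAt
  have h2 : HasFDerivAt (fun y : EuclideanSpace ℝ (Fin d) => y - x)
      (ContinuousLinearMap.id ℝ _) p := (hasFDerivAt_id p).sub_const x
  have h3 := h2.norm_sq
  have h4 := h3.const_mul ((2 * τ)⁻¹)
  have hF := h1.add h4
  have hloc : IsLocalMin (fun y => V y + (2 * τ)⁻¹ * ‖y - x‖ ^ 2) p :=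
    Filter.Eventually.of_forall fun y => by simpa [div_eq_inv_mul] using hmin y
  have hzero := hloc.hasFDerivAt_eq_zero hF
  have key : ∀ v : EuclideanSpace ℝ (Fin d), ⟪V' p, v⟫ + τ⁻¹ * ⟪p - x, v⟫ = 0 := by
    intro v
    have h := ContinuousLinearMap.ext_iff.mp hzero v
    simp only [ContinuousLinearMap.add_apply, ContinuousLinearMap.smul_apply, two_smul,
      ContinuousLinearMap.coe_comp', Function.comp_apply, ContinuousLinearMap.coe_id', id_eq,
      innerSL_apply_apply, InnerProductSpace.toDual_apply_apply, smul_eq_mul,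
      ContinuousLinearMap.zero_apply] at h
    have h2τ : (2 : ℝ) * τ ≠ 0 := by positivity
    field_simp at h ⊢
    linarith
  have hVp : τ • V' p = x - p := by
    have hw : (V' p - τ⁻¹ • (x - p)) = 0 := by
      rw [← inner_self_eq_zero (𝕜 := ℝ)]
      set w := V' p - τ⁻¹ • (x - p) with hwdef
      have hk := key w
      have heq : ⟪V' p - τ⁻¹ • (x - p), w⟫
          = ⟪V' p, w⟫ - τ⁻¹ * ⟪x - p, w⟫ := by
        rw [inner_sub_left, real_inner_smul_left]
      rw [← hwdef] at heq
      rw [heq]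
      have hpx : ⟪p - x, w⟫ = -⟪x - p, w⟫ := by
        rw [← inner_neg_left]; congr 1; abel
      rw [hpx] at hk
      linarith
    have := sub_eq_zero.mp hw
    rw [this, smul_smul, mul_inv_cancel₀ hτ.ne', one_smul]
  -- strong convexity at (0, p)
  have hco := hconvOut 0 p
  have hVmin := hminV p
  have hin : ⟪V' p, (0 : EuclideanSpace ℝ (Fin d)) - p⟫ = -⟪V' p, p⟫ := by
    rw [zero_sub, inner_neg_right]
  have hnp : ‖(0 : EuclideanSpace ℝ (Fin d)) - p‖ = ‖p‖ := by
    rw [zero_sub, norm_neg]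
  rw [hin, hnp, ← hχ] at hco
  have hip : lam / 2 * χ * ‖p‖ ^ 2 ≤ ⟪V' p, p⟫ := by linarith
  -- expand ‖x‖²
  have hx : x = p + τ • V' p := by rw [hVp]; abel
  have hnorm : ‖x‖ ^ 2 = ‖p‖ ^ 2 + 2 * (τ * ⟪V' p, p⟫) + ‖τ • V' p‖ ^ 2 := by
    rw [hx, ← real_inner_self_eq_norm_sq, inner_add_add_self, real_inner_self_eq_norm_sq,
      real_inner_self_eq_norm_sq, real_inner_smul_left, real_inner_smul_right,
      real_inner_comm p (V' p)]
    ring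
  nlinarith [sq_nonneg ‖τ • V' p‖, sq_nonneg ‖p‖, mul_le_mul_of_nonneg_left hip (le_of_lt hτ)]
end

section
/- Let X, Z, Θ be pairwise independent ℝ^d-valued random variables with finite m-th moments, m ≥ 2, and E[Z] = 0. Then there exists a constant c = c(m) such that E|X + Θ + Z|^m ≤ E|X|^m + c·(E|X|^{m−1}·E|Θ| + E[|X|^{m−2}|Z+Θ|²] + E|Z+Θ|^m). -/
/-!
Write `W = Z + Θ`. Pointwise, `‖x + w‖ ^ m ≤ ‖x‖ ^ m + m ‖x‖ ^ (m - 2) ⟪x, w⟫ +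
C (‖x‖ ^ (m - 2) ‖w‖ ^ 2 + ‖w‖ ^ m)`: when `‖x‖ ≤ 2 ‖w‖` every term is `O(‖w‖ ^ m)`, and otherwise
`‖x + w‖ ^ 2` stays within a factor `4` of `‖x‖ ^ 2`, so the second-order Taylor bound for
`t ↦ t ^ (m / 2)` at `t = ‖x‖ ^ 2` applies. After taking expectations, independence turns the
first-order term into `⟪E[‖X‖ ^ (m - 2) X], E Z⟫ = 0` plus `E[‖X‖ ^ (m - 2) ⟪X, Θ⟫]`, which is
at most `E ‖X‖ ^ (m - 1) · E ‖Θ‖`.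
-/

open MeasureTheory ProbabilityTheory Set
open scoped RealInnerProductSpace

namespace MomentExpansion

section Scalar

variable {a b p q r s t h : ℝ}

theorem rpow_mul_rpow_le_rpow_add_add_rpow_add (ha : 0 ≤ a) (hb : 0 ≤ b) (hr : 0 ≤ r)
    (hs : 0 ≤ s) (hrs : r + s ≠ 0) : a ^ r * b ^ s ≤ a ^ (r + s) + b ^ (r + s) := by
  rcases le_total a b with hab | hab
  · calc a ^ r * b ^ s ≤ b ^ r * b ^ s := by gcongr
      _ = b ^ (r + s) := (Real.rpow_add' hb hrs).symm
      _ ≤ a ^ (r + s) + b ^ (r + s) := le_add_of_nonneg_left (by positivity)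
  · calc a ^ r * b ^ s ≤ a ^ r * a ^ s := by gcongr
      _ = a ^ (r + s) := (Real.rpow_add' ha hrs).symm
      _ ≤ a ^ (r + s) + b ^ (r + s) := le_add_of_nonneg_right (by positivity)

theorem rpow_sub_two_mul_self_le (m : ℝ) (ht : 0 ≤ t) : t ^ (m - 2) * t ≤ t ^ (m - 1) := by
  rcases ht.eq_or_lt with rfl | ht
  · simp only [mul_zero]
    positivity
  · rw [show m - 1 = m - 2 + 1 by ring, Real.rpow_add ht, Real.rpow_one]

theorem rpow_add_mul_rpow_sub_one_mul_sub_le {x y : ℝ} (hp : 1 ≤ p) (hx : 0 ≤ x) (hy : 0 < y) :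
    y ^ p + p * y ^ (p - 1) * (x - y) ≤ x ^ p := by
  have bernoulli := one_add_mul_self_le_rpow_one_add
    (show -1 ≤ x / y - 1 by linarith [div_nonneg hx hy.le]) hp
  rw [add_sub_cancel, Real.div_rpow hx hy.le] at bernoulli
  calc y ^ p + p * y ^ (p - 1) * (x - y) = y ^ p * (1 + p * (x / y - 1)) := by
        rw [Real.rpow_sub_one hy.ne']; field_simp
    _ ≤ y ^ p * (x ^ p / y ^ p) := by gcongr
    _ = x ^ p := by field_simp

theorem rpow_le_rpow_abs_mul_rpow_of_mem_Icc (ha : 1 ≤ a) (hs : 0 < s)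
    (ht : t ∈ Icc (s / a) (a * s)) : t ^ q ≤ a ^ |q| * s ^ q := by
  have hsa : 0 < s / a := by positivity
  rcases le_total 0 q with hq | hq
  · calc t ^ q ≤ (a * s) ^ q := Real.rpow_le_rpow (hsa.le.trans ht.1) ht.2 hq
      _ = a ^ |q| * s ^ q := by rw [abs_of_nonneg hq, Real.mul_rpow (by linarith) hs.le]
  · calc t ^ q ≤ (s / a) ^ q := Real.rpow_le_rpow_of_nonpos hsa ht.1 hq
      _ = a ^ |q| * s ^ q := by
        rw [abs_of_nonpos hq, Real.div_rpow hs.le (by linarith), Real.rpow_neg (by linarith)]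
        ring

theorem abs_rpow_sub_rpow_le_of_mem_Icc (ha : 1 ≤ a) (hs : 0 < s)
    (ht : t ∈ Icc (s / a) (a * s)) :
    |t ^ q - s ^ q| ≤ |q| * a ^ |q - 1| * s ^ (q - 1) * |t - s| := by
  have hsa : 0 < s / a := by positivity
  have hs_mem : s ∈ Icc (s / a) (a * s) :=
    ⟨div_le_self hs.le ha, le_mul_of_one_le_left hs.le ha⟩
  refine Convex.norm_image_sub_le_of_norm_hasDerivWithin_le
    (f := fun u : ℝ ↦ u ^ q) (f' := fun u ↦ q * u ^ (q - 1)) (fun u hu ↦ ?_) (fun u hu ↦ ?_)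
    (convex_Icc _ _) hs_mem ht
  · exact (Real.hasDerivAt_rpow_const (Or.inl (hsa.trans_le hu.1).ne')).hasDerivWithinAt
  · rw [Real.norm_eq_abs, abs_mul, abs_of_nonneg (Real.rpow_nonneg (hsa.le.trans hu.1) _),
      mul_assoc]
    gcongr
    exact rpow_le_rpow_abs_mul_rpow_of_mem_Icc ha hs hu

theorem rpow_add_le_of_mem_Icc (hp : 1 ≤ p) (ha : 1 ≤ a) (hs : 0 < s)
    (hsh : s + h ∈ Icc (s / a) (a * s)) :
    (s + h) ^ p ≤
      s ^ p + p * s ^ (p - 1) * h + p * (p - 1) * a ^ |p - 2| * s ^ (p - 2) * h ^ 2 := by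
  have hsh0 : 0 < s + h := (div_pos hs (by linarith)).trans_le hsh.1
  have tangent := rpow_add_mul_rpow_sub_one_mul_sub_le hp hs.le hsh0
  have lipschitz := abs_rpow_sub_rpow_le_of_mem_Icc (q := p - 1) ha hs hsh
  rw [abs_of_nonneg (by linarith : 0 ≤ p - 1), show p - 1 - 1 = p - 2 by ring,
    add_sub_cancel_left] at lipschitz
  have hdiff : ((s + h) ^ (p - 1) - s ^ (p - 1)) * h ≤
      (p - 1) * a ^ |p - 2| * s ^ (p - 2) * h ^ 2 :=
    calc ((s + h) ^ (p - 1) - s ^ (p - 1)) * h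
        ≤ |(s + h) ^ (p - 1) - s ^ (p - 1)| * |h| := by rw [← abs_mul]; exact le_abs_self _
      _ ≤ (p - 1) * a ^ |p - 2| * s ^ (p - 2) * |h| * |h| := by gcongr
      _ = (p - 1) * a ^ |p - 2| * s ^ (p - 2) * h ^ 2 := by rw [mul_assoc, abs_mul_abs_self, sq]
  nlinarith [mul_le_mul_of_nonneg_left hdiff (by linarith : 0 ≤ p)]

end Scalar

section InnerProductSpace

variable {E : Type*} [NormedAddCommGroup E] [InnerProductSpace ℝ E] {m : ℝ}

theorem abs_norm_rpow_mul_inner_le (m : ℝ) (u v : E) :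
    |‖u‖ ^ (m - 2) * ⟪u, v⟫| ≤ ‖u‖ ^ (m - 1) * ‖v‖ := by
  calc |‖u‖ ^ (m - 2) * ⟪u, v⟫| = ‖u‖ ^ (m - 2) * |⟪u, v⟫| := by
        rw [abs_mul, abs_of_nonneg (by positivity)]
    _ ≤ ‖u‖ ^ (m - 2) * ‖u‖ * ‖v‖ := by
        rw [mul_assoc]; gcongr; exact abs_real_inner_le_norm u v
    _ ≤ ‖u‖ ^ (m - 1) * ‖v‖ := by gcongr; exact rpow_sub_two_mul_self_le m (norm_nonneg u)

theorem norm_add_rpow_le_of_norm_le (hm : 1 ≤ m) {x w : E} (hxw : ‖x‖ ≤ 2 * ‖w‖) :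
    ‖x + w‖ ^ m ≤ ‖x‖ ^ m + m * (‖x‖ ^ (m - 2) * ⟪x, w⟫) + (3 ^ m + m * 2 ^ (m - 1)) * ‖w‖ ^ m := by
  have main : ‖x + w‖ ^ m ≤ 3 ^ m * ‖w‖ ^ m :=
    calc ‖x + w‖ ^ m ≤ (3 * ‖w‖) ^ m := by
          gcongr; linarith [norm_add_le x w]
      _ = 3 ^ m * ‖w‖ ^ m := Real.mul_rpow (by norm_num) (norm_nonneg w)
  have cross : -(‖x‖ ^ (m - 2) * ⟪x, w⟫) ≤ 2 ^ (m - 1) * ‖w‖ ^ m :=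
    calc -(‖x‖ ^ (m - 2) * ⟪x, w⟫) ≤ ‖x‖ ^ (m - 1) * ‖w‖ :=
          (neg_le_abs _).trans (abs_norm_rpow_mul_inner_le m x w)
      _ ≤ (2 * ‖w‖) ^ (m - 1) * ‖w‖ := by gcongr
      _ = 2 ^ (m - 1) * ‖w‖ ^ m := by
          rw [Real.mul_rpow (by norm_num) (norm_nonneg w), mul_assoc,
            ← Real.rpow_add_one' (norm_nonneg w) (by linarith), sub_add_cancel]
  linarith [mul_le_mul_of_nonneg_left cross (by linarith : 0 ≤ m),
    Real.rpow_nonneg (norm_nonneg x) m]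

theorem norm_add_rpow_le_of_lt_norm (hm : 2 ≤ m) {x w : E} (hxw : 2 * ‖w‖ < ‖x‖) :
    ‖x + w‖ ^ m ≤ ‖x‖ ^ m + m * (‖x‖ ^ (m - 2) * ⟪x, w⟫) +
      (m / 2 + 25 / 4 * (m / 2 * (m / 2 - 1) * 4 ^ |m / 2 - 2|)) * (‖x‖ ^ (m - 2) * ‖w‖ ^ 2) := by
  have hx : 0 < ‖x‖ := by linarith [norm_nonneg w]
  set h := 2 * ⟪x, w⟫ + ‖w‖ ^ 2
  have hsq : ‖x‖ ^ 2 + h = ‖x + w‖ ^ 2 := by rw [norm_add_sq_real]; ring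
  have hwindow : ‖x‖ ^ 2 + h ∈ Icc (‖x‖ ^ 2 / 4) (4 * ‖x‖ ^ 2) := by
    have lower : ‖x‖ / 2 ≤ ‖x + w‖ := by
      have := norm_sub_norm_le x (-w)
      rw [norm_neg, sub_neg_eq_add] at this
      linarith
    have upper : ‖x + w‖ ≤ 2 * ‖x‖ := by linarith [norm_add_le x w]
    rw [hsq]
    constructor <;> nlinarith
  have taylor := rpow_add_le_of_mem_Icc (p := m / 2) (by linarith) (by norm_num)
    (by positivity) hwindow
  have sq_rpow : ∀ {t : ℝ}, 0 ≤ t → ∀ r : ℝ, (t ^ 2) ^ r = t ^ (2 * r) := fun ht r ↦ by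
    rw [← Real.rpow_natCast_mul ht]; norm_num
  rw [hsq, sq_rpow (norm_nonneg _), sq_rpow hx.le, sq_rpow hx.le, sq_rpow hx.le,
    show 2 * (m / 2) = m by ring, show 2 * (m / 2 - 1) = m - 2 by ring,
    show 2 * (m / 2 - 2) = m - 4 by ring] at taylor
  have hh : h ^ 2 ≤ 25 / 4 * (‖x‖ ^ 2 * ‖w‖ ^ 2) := by
    have hinner := abs_real_inner_le_norm x w
    have : |h| ≤ 5 / 2 * (‖x‖ * ‖w‖) :=
      calc |h| ≤ 2 * |⟪x, w⟫| + ‖w‖ ^ 2 := by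
            refine (abs_add_le _ _).trans ?_
            rw [abs_mul, abs_two, abs_of_nonneg (sq_nonneg ‖w‖)]
        _ ≤ 5 / 2 * (‖x‖ * ‖w‖) := by nlinarith [norm_nonneg w]
    nlinarith [sq_abs h, abs_nonneg h]
  have hrem : ‖x‖ ^ (m - 4) * h ^ 2 ≤ 25 / 4 * (‖x‖ ^ (m - 2) * ‖w‖ ^ 2) :=
    calc ‖x‖ ^ (m - 4) * h ^ 2 ≤ ‖x‖ ^ (m - 4) * (25 / 4 * (‖x‖ ^ 2 * ‖w‖ ^ 2)) := by gcongr
      _ = 25 / 4 * (‖x‖ ^ (m - 2) * ‖w‖ ^ 2) := by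
        rw [show m - 2 = m - 4 + 2 by ring, Real.rpow_add hx, Real.rpow_two]; ring
  have hK : 0 ≤ m / 2 * (m / 2 - 1) * 4 ^ |m / 2 - 2| := by
    have : 0 ≤ m / 2 - 1 := by linarith
    positivity
  nlinarith [mul_le_mul_of_nonneg_left hrem hK]

/-- The summand `3 ^ m + m * 2 ^ (m - 1)` serves the regime `‖x‖ ≤ 2 * ‖w‖`, the remaining one
comes from the second-order Taylor bound for `t ↦ t ^ (m / 2)` at `t = ‖x‖ ^ 2`. -/
noncomputable def expansionConst (m : ℝ) : ℝ :=
  3 ^ m + m * 2 ^ (m - 1) + (m / 2 + 25 / 4 * (m / 2 * (m / 2 - 1) * 4 ^ |m / 2 - 2|))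

theorem expansionConst_nonneg (hm : 2 ≤ m) : 0 ≤ expansionConst m := by
  have : 0 ≤ m / 2 - 1 := by linarith
  have : 0 ≤ m := by linarith
  unfold expansionConst
  positivity

theorem norm_add_rpow_le (hm : 2 ≤ m) (x w : E) :
    ‖x + w‖ ^ m ≤ ‖x‖ ^ m + m * (‖x‖ ^ (m - 2) * ⟪x, w⟫) +
      expansionConst m * (‖x‖ ^ (m - 2) * ‖w‖ ^ 2 + ‖w‖ ^ m) := by
  have hsq : 0 ≤ ‖x‖ ^ (m - 2) * ‖w‖ ^ 2 := by positivity
  have hwm : 0 ≤ ‖w‖ ^ m := by positivity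
  have hK : 0 ≤ m / 2 * (m / 2 - 1) * 4 ^ |m / 2 - 2| := by
    have : 0 ≤ m / 2 - 1 := by linarith
    positivity
  have h3 : 0 ≤ 3 ^ m + m * 2 ^ (m - 1) := by
    have : 0 ≤ m := by linarith
    positivity
  unfold expansionConst
  rcases le_or_gt ‖x‖ (2 * ‖w‖) with hxw | hxw
  · nlinarith [norm_add_rpow_le_of_norm_le (by linarith : (1 : ℝ) ≤ m) hxw]
  · nlinarith [norm_add_rpow_le_of_lt_norm hm hxw]

end InnerProductSpace

theorem integrable_norm_add_rpow {Ω E : Type*} {mΩ : MeasurableSpace Ω} {μ : Measure Ω}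
    [NormedAddCommGroup E] {m : ℝ} {X W : Ω → E} (hm : 0 < m)
    (hX : AEStronglyMeasurable X μ) (hW : AEStronglyMeasurable W μ)
    (hXm : Integrable (fun ω ↦ ‖X ω‖ ^ m) μ) (hWm : Integrable (fun ω ↦ ‖W ω‖ ^ m) μ) :
    Integrable (fun ω ↦ ‖X ω + W ω‖ ^ m) μ := by
  have memLp_iff {f : Ω → E} (hf : AEStronglyMeasurable f μ) :=
    integrable_norm_rpow_iff hf (p := ENNReal.ofReal m) (by simpa using hm) ENNReal.ofReal_ne_top
  simp only [ENNReal.toReal_ofReal hm.le] at memLp_iff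
  exact (memLp_iff (hX.add hW)).2 (((memLp_iff hX).1 hXm).add ((memLp_iff hW).1 hWm))

theorem integrable_norm_rpow_mul_norm_sq {Ω E : Type*} {mΩ : MeasurableSpace Ω} {μ : Measure Ω}
    [NormedAddCommGroup E] [MeasurableSpace E] [OpensMeasurableSpace E] {m : ℝ} {X W : Ω → E}
    (hm : 2 ≤ m) (hX : AEMeasurable X μ) (hW : AEMeasurable W μ)
    (hXm : Integrable (fun ω ↦ ‖X ω‖ ^ m) μ)
    (hWm : Integrable (fun ω ↦ ‖W ω‖ ^ m) μ) :
    Integrable (fun ω ↦ ‖X ω‖ ^ (m - 2) * ‖W ω‖ ^ 2) μ := by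
  refine (hXm.add hWm).mono' ((hX.norm.pow_const _).mul (hW.norm.pow_const _)).aestronglyMeasurable
    (ae_of_all _ fun ω ↦ ?_)
  have young := rpow_mul_rpow_le_rpow_add_add_rpow_add (norm_nonneg (X ω)) (norm_nonneg (W ω))
    (by linarith : 0 ≤ m - 2) zero_le_two (by linarith : m - 2 + 2 ≠ 0)
  rw [Real.rpow_two, sub_add_cancel] at young
  rwa [Real.norm_eq_abs, abs_of_nonneg (by positivity)]

section Integral

variable {Ω E : Type*} {mΩ : MeasurableSpace Ω} {μ : Measure Ω}
  [NormedAddCommGroup E] [InnerProductSpace ℝ E] [MeasurableSpace E] [BorelSpace E]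
  [SecondCountableTopology E] {m : ℝ} {X W : Ω → E}

theorem integrable_norm_rpow_mul_inner (hm : 1 ≤ m) (hX : AEMeasurable X μ)
    (hW : AEMeasurable W μ) (hXm : Integrable (fun ω ↦ ‖X ω‖ ^ m) μ)
    (hWm : Integrable (fun ω ↦ ‖W ω‖ ^ m) μ) :
    Integrable (fun ω ↦ ‖X ω‖ ^ (m - 2) * ⟪X ω, W ω⟫) μ := by
  refine (hXm.add hWm).mono' ((hX.norm.pow_const _).mul (hX.inner hW)).aestronglyMeasurable
    (ae_of_all _ fun ω ↦ ?_)
  have young := rpow_mul_rpow_le_rpow_add_add_rpow_add (norm_nonneg (X ω)) (norm_nonneg (W ω))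
    (by linarith : 0 ≤ m - 1) zero_le_one (by linarith : m - 1 + 1 ≠ 0)
  rw [Real.rpow_one, sub_add_cancel] at young
  exact (abs_norm_rpow_mul_inner_le m _ _).trans young

theorem integral_norm_add_rpow_le (hm : 2 ≤ m) (hX : AEMeasurable X μ) (hW : AEMeasurable W μ)
    (hXm : Integrable (fun ω ↦ ‖X ω‖ ^ m) μ) (hWm : Integrable (fun ω ↦ ‖W ω‖ ^ m) μ) :
    ∫ ω, ‖X ω + W ω‖ ^ m ∂μ ≤
      ∫ ω, ‖X ω‖ ^ m ∂μ + m * ∫ ω, ‖X ω‖ ^ (m - 2) * ⟪X ω, W ω⟫ ∂μ +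
        expansionConst m * (∫ ω, ‖X ω‖ ^ (m - 2) * ‖W ω‖ ^ 2 ∂μ + ∫ ω, ‖W ω‖ ^ m ∂μ) := by
  have hinner := integrable_norm_rpow_mul_inner (by linarith) hX hW hXm hWm
  have hsq := integrable_norm_rpow_mul_norm_sq hm hX hW hXm hWm
  have hfirst : Integrable (fun ω ↦ ‖X ω‖ ^ m + m * (‖X ω‖ ^ (m - 2) * ⟪X ω, W ω⟫)) μ :=
    hXm.add (hinner.const_mul m)
  have hsecond : Integrable
      (fun ω ↦ expansionConst m * (‖X ω‖ ^ (m - 2) * ‖W ω‖ ^ 2 + ‖W ω‖ ^ m)) μ :=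
    (hsq.add hWm).const_mul _
  calc ∫ ω, ‖X ω + W ω‖ ^ m ∂μ
      ≤ ∫ ω, ‖X ω‖ ^ m + m * (‖X ω‖ ^ (m - 2) * ⟪X ω, W ω⟫) +
          expansionConst m * (‖X ω‖ ^ (m - 2) * ‖W ω‖ ^ 2 + ‖W ω‖ ^ m) ∂μ :=
        integral_mono_of_nonneg (ae_of_all _ fun ω ↦ by positivity) (hfirst.add hsecond)
          (ae_of_all _ fun ω ↦ norm_add_rpow_le hm (X ω) (W ω))
    _ = _ := by
        rw [integral_add hfirst hsecond, integral_add hXm (hinner.const_mul m),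
          integral_const_mul, integral_const_mul, integral_add hsq hWm]

theorem integral_norm_rpow_mul_inner_eq_zero [CompleteSpace E] {Z : Ω → E}
    (hXZ : X ⟂ᵢ[μ] Z) (hX : AEMeasurable X μ) (hXm : Integrable (fun ω ↦ ‖X ω‖ ^ (m - 1)) μ)
    (hZ : Integrable Z μ) (hZ0 : ∫ ω, Z ω ∂μ = 0) :
    ∫ ω, ‖X ω‖ ^ (m - 2) * ⟪X ω, Z ω⟫ ∂μ = 0 := by
  have hf : Integrable (fun x : E ↦ ‖x‖ ^ (m - 2) • x) (μ.map X) := by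
    rw [integrable_map_measure (by fun_prop) hX]
    refine hXm.mono' (by fun_prop) (ae_of_all _ fun ω ↦ ?_)
    rw [Function.comp_apply, norm_smul, Real.norm_eq_abs, abs_of_nonneg (by positivity)]
    exact rpow_sub_two_mul_self_le m (norm_nonneg _)
  have hg : Integrable id (μ.map Z) := by
    rwa [integrable_map_measure (by fun_prop) hZ.aemeasurable]
  have := hXZ.integral_bilin_comp_comp hX hZ.aemeasurable hf hg (innerSL ℝ)
  convert this using 1
  · simp_rw [← real_inner_smul_left]; rfl
  · simp [hZ0]

theorem integral_norm_rpow_mul_inner_le (hXW : X ⟂ᵢ[μ] W) (hX : AEMeasurable X μ)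
    (hW : AEMeasurable W μ) (hXm : Integrable (fun ω ↦ ‖X ω‖ ^ (m - 1)) μ)
    (hW1 : Integrable (fun ω ↦ ‖W ω‖) μ) :
    ∫ ω, ‖X ω‖ ^ (m - 2) * ⟪X ω, W ω⟫ ∂μ ≤ (∫ ω, ‖X ω‖ ^ (m - 1) ∂μ) * ∫ ω, ‖W ω‖ ∂μ := by
  have hindep : (fun ω ↦ ‖X ω‖ ^ (m - 1)) ⟂ᵢ[μ] (fun ω ↦ ‖W ω‖) :=
    hXW.comp (φ := fun x : E ↦ ‖x‖ ^ (m - 1)) (by fun_prop) measurable_norm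
  have hprod := hindep.integrable_mul hXm hW1
  rw [← hindep.integral_fun_mul_eq_mul_integral hXm.1 hW1.1]
  have hbound := fun ω ↦ abs_norm_rpow_mul_inner_le m (X ω) (W ω)
  refine integral_mono (hprod.mono' ?_ (ae_of_all _ hbound)) hprod
    fun ω ↦ (le_abs_self _).trans (hbound ω)
  exact ((hX.norm.pow_const _).mul (hX.inner hW)).aestronglyMeasurable

theorem integral_norm_rpow_mul_inner_add_le [CompleteSpace E] [IsFiniteMeasure μ] (hm : 2 ≤ m)
    {Z Θ : Ω → E} (hXZ : X ⟂ᵢ[μ] Z) (hXΘ : X ⟂ᵢ[μ] Θ) (hX : AEMeasurable X μ)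
    (hZ : AEMeasurable Z μ) (hΘ : AEMeasurable Θ μ) (hXm : Integrable (fun ω ↦ ‖X ω‖ ^ m) μ)
    (hZm : Integrable (fun ω ↦ ‖Z ω‖ ^ m) μ) (hΘm : Integrable (fun ω ↦ ‖Θ ω‖ ^ m) μ)
    (hZ1 : Integrable Z μ) (hZ0 : ∫ ω, Z ω ∂μ = 0) :
    ∫ ω, ‖X ω‖ ^ (m - 2) * ⟪X ω, Z ω + Θ ω⟫ ∂μ ≤
      (∫ ω, ‖X ω‖ ^ (m - 1) ∂μ) * ∫ ω, ‖Θ ω‖ ∂μ := by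
  have hXm1 : Integrable (fun ω ↦ ‖X ω‖ ^ (m - 1)) μ :=
    integrable_norm_rpow_of_le hX.aestronglyMeasurable (by linarith) (by linarith)
      (by linarith) hXm
  have hΘ1 : Integrable (fun ω ↦ ‖Θ ω‖) μ := by
    simpa using integrable_norm_rpow_of_le hΘ.aestronglyMeasurable zero_le_one (by linarith)
      (by linarith) hΘm
  simp_rw [inner_add_right, mul_add]
  rw [integral_add (integrable_norm_rpow_mul_inner (by linarith) hX hZ hXm hZm)
      (integrable_norm_rpow_mul_inner (by linarith) hX hΘ hXm hΘm),
    integral_norm_rpow_mul_inner_eq_zero hXZ hX hXm1 hZ1 hZ0, zero_add]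
  exact integral_norm_rpow_mul_inner_le hXΘ hX hΘ hXm1 hΘ1

end Integral

end MomentExpansion

open MomentExpansion

/-- Moment expansion lemma: for pairwise independent `X, Z, Θ` with finite `m`-th moments,
`m ≥ 2`, and `E[Z] = 0`, there is a constant `c = c(m)` with
`E|X+Θ+Z|^m ≤ E|X|^m + c(E|X|^{m−1}E|Θ| + E[|X|^{m−2}|Z+Θ|²] + E|Z+Θ|^m)`. -/
theorem moment_expansion_bound (m : ℝ) (hm : 2 ≤ m) :
    ∃ c : ℝ, 0 < c ∧
      ∀ (d : ℕ) (Ω : Type) (_ : MeasurableSpace Ω) (P : Measure Ω),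
        IsProbabilityMeasure P →
        ∀ X Z Θ : Ω → EuclideanSpace ℝ (Fin d),
          AEMeasurable X P → AEMeasurable Z P → AEMeasurable Θ P →
          ProbabilityTheory.IndepFun X Z P →
          ProbabilityTheory.IndepFun X Θ P →
          ProbabilityTheory.IndepFun Z Θ P →
          Integrable (fun ω => ‖X ω‖ ^ m) P →
          Integrable (fun ω => ‖Z ω‖ ^ m) P →
          Integrable (fun ω => ‖Θ ω‖ ^ m) P →
          Integrable Z P →
          (∫ ω, Z ω ∂P) = 0 →
          (∫ ω, ‖X ω + Θ ω + Z ω‖ ^ m ∂P) ≤ (∫ ω, ‖X ω‖ ^ m ∂P) +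
            c * ((∫ ω, ‖X ω‖ ^ (m - 1) ∂P) * (∫ ω, ‖Θ ω‖ ∂P) +
                 (∫ ω, ‖X ω‖ ^ (m - 2) * ‖Z ω + Θ ω‖ ^ 2 ∂P) +
                 (∫ ω, ‖Z ω + Θ ω‖ ^ m ∂P)) := by
  have hC := expansionConst_nonneg hm
  refine ⟨m + expansionConst m, by linarith, ?_⟩
  intro d Ω _ P _ X Z Θ hX hZ hΘ hXZ hXΘ _ hXm hZm hΘm hZ1 hZ0
  have hWm := integrable_norm_add_rpow (by linarith) hZ.aestronglyMeasurable
    hΘ.aestronglyMeasurable hZm hΘm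
  have expansion :=
    integral_norm_add_rpow_le (W := fun ω ↦ Z ω + Θ ω) hm hX (hZ.add hΘ) hXm hWm
  have cross := integral_norm_rpow_mul_inner_add_le hm hXZ hXΘ hX hZ hΘ hXm hZm hΘm hZ1 hZ0
  have hT : 0 ≤ (∫ ω, ‖X ω‖ ^ (m - 1) ∂P) * ∫ ω, ‖Θ ω‖ ∂P :=
    mul_nonneg (integral_nonneg fun _ ↦ by positivity) (integral_nonneg fun _ ↦ by positivity)
  have hB : 0 ≤ ∫ ω, ‖X ω‖ ^ (m - 2) * ‖Z ω + Θ ω‖ ^ 2 ∂P :=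
    integral_nonneg fun _ ↦ by positivity
  have hD : 0 ≤ ∫ ω, ‖Z ω + Θ ω‖ ^ m ∂P := integral_nonneg fun _ ↦ by positivity
  simp only [add_right_comm (X _) (Θ _) (Z _), add_assoc (X _) (Z _) (Θ _)]
  linarith [mul_le_mul_of_nonneg_left cross (by linarith : 0 ≤ m), mul_nonneg hC hT,
    mul_nonneg (by linarith : 0 ≤ m) hB, mul_nonneg (by linarith : 0 ≤ m) hD]
end

section
/- Let μ, ν, ρ be probability measures on ℝ^d with finite second moments, where ρ is supported in the closed ball B(0,δ). Then W₂²(μ∗ρ, ν) ≤ W₂²(μ, ν) + (2(E|X| + E|Y|) + δ)·δ, where X ∼ μ, Y ∼ ν and W₂ is the 2-Wasserstein distance. -/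
/-!
Let `(X, Y)` be any coupling of `μ` and `ν` and let `Z ∼ ρ` be independent of it. Then
`(X + Z, Y)` couples `μ ∗ ρ` with `ν`, and since `‖Z‖ ≤ δ` almost surely,
`‖X + Z - Y‖² ≤ ‖X - Y‖² + 2δ‖X - Y‖ + δ² ≤ ‖X - Y‖² + (2(‖X‖ + ‖Y‖) + δ)δ`.
Taking expectations and the infimum over couplings gives the bound for the `ℝ≥0∞`-valued
infima; second moments make `W₂²(μ, ν)` finite, so it survives the passage to `ℝ`.
-/

open MeasureTheory

/-- Squared 2-Wasserstein distance on `ℝ^d`, as infimum over couplings. -/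
noncomputable def W2sq {d : ℕ} (μ ν : Measure (EuclideanSpace ℝ (Fin d))) : ℝ :=
  (⨅ γ : {γ : Measure (EuclideanSpace ℝ (Fin d) × EuclideanSpace ℝ (Fin d)) //
        γ.map Prod.fst = μ ∧ γ.map Prod.snd = ν},
      ∫⁻ p : EuclideanSpace ℝ (Fin d) × EuclideanSpace ℝ (Fin d),
        ENNReal.ofReal (‖p.1 - p.2‖ ^ 2) ∂γ.1).toReal

open Measure Metric ENNReal

lemma norm_add_sub_sq_le {E : Type*} [SeminormedAddCommGroup E] {x y z : E} {δ : ℝ}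
    (hz : ‖z‖ ≤ δ) : ‖x + z - y‖ ^ 2 ≤ ‖x - y‖ ^ 2 + (2 * (‖x‖ + ‖y‖) + δ) * δ := by
  have h₁ : ‖x + z - y‖ ≤ ‖x - y‖ + δ :=
    (add_sub_right_comm x z y ▸ norm_add_le _ _).trans (by linarith)
  have h₂ : ‖x - y‖ ≤ ‖x‖ + ‖y‖ := norm_sub_le x y
  have h₃ : 0 ≤ δ := (norm_nonneg z).trans hz
  nlinarith [norm_nonneg (x + z - y), norm_nonneg (x - y)]

section Transport

variable {E : Type*} [NormedAddCommGroup E] [MeasurableSpace E]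

noncomputable def sqCost (γ : Measure (E × E)) : ℝ≥0∞ :=
  ∫⁻ p, ENNReal.ofReal (‖p.1 - p.2‖ ^ 2) ∂γ

noncomputable def eW2sq (μ ν : Measure E) : ℝ≥0∞ :=
  ⨅ γ : {γ : Measure (E × E) // γ.map Prod.fst = μ ∧ γ.map Prod.snd = ν}, sqCost γ.1

lemma eW2sq_le_sqCost {μ ν : Measure E} {γ : Measure (E × E)} (h₁ : γ.map Prod.fst = μ)
    (h₂ : γ.map Prod.snd = ν) : eW2sq μ ν ≤ sqCost γ :=
  iInf_le (fun γ : {γ : Measure (E × E) // γ.map Prod.fst = μ ∧ γ.map Prod.snd = ν} ↦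
    sqCost γ.1) ⟨γ, h₁, h₂⟩

lemma sqCost_lt_top {γ : Measure (E × E)} (h₁ : MemLp Prod.fst 2 γ) (h₂ : MemLp Prod.snd 2 γ) :
    sqCost γ < ∞ :=
  ((memLp_two_iff_integrable_sq_norm (h₁.sub h₂).1).1 (h₁.sub h₂)).lintegral_lt_top

lemma eW2sq_ne_top {μ ν : Measure E} [IsProbabilityMeasure μ] [IsProbabilityMeasure ν]
    (hμ : MemLp id 2 μ) (hν : MemLp id 2 ν) : eW2sq μ ν ≠ ∞ :=
  ((eW2sq_le_sqCost (measurePreserving_fst (μ := μ) (ν := ν)).map_eq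
    measurePreserving_snd.map_eq).trans_lt
    (sqCost_lt_top (hμ.comp_measurePreserving measurePreserving_fst)
      (hν.comp_measurePreserving measurePreserving_snd))).ne

/-- The law of `(X + Z, Y)` for `(X, Y) ∼ γ` and `Z ∼ ρ` independent. -/
noncomputable def convFst (γ : Measure (E × E)) (ρ : Measure E) : Measure (E × E) :=
  (γ.prod ρ).map fun q ↦ (q.1.1 + q.2, q.1.2)

variable [BorelSpace E] [SecondCountableTopology E]

lemma map_fst_convFst (γ : Measure (E × E)) [SFinite γ] (ρ : Measure E) [SFinite ρ] :
    (convFst γ ρ).map Prod.fst = γ.map Prod.fst ∗ ρ := by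
  rw [convFst, map_map measurable_fst (by fun_prop), conv, ← map_id (μ := ρ),
    map_prod_map _ _ measurable_fst measurable_id, map_id, map_map (by fun_prop) (by fun_prop)]
  rfl

lemma map_snd_convFst (γ : Measure (E × E)) [SFinite γ] (ρ : Measure E) [IsProbabilityMeasure ρ] :
    (convFst γ ρ).map Prod.snd = γ.map Prod.snd := by
  rw [convFst, map_map measurable_snd (by fun_prop)]
  change map (Prod.snd ∘ Prod.fst) (γ.prod ρ) = _
  rw [← map_map measurable_snd measurable_fst, measurePreserving_fst.map_eq]

lemma measurable_sqCost_integrand :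
    Measurable fun p : E × E ↦ ENNReal.ofReal (‖p.1 - p.2‖ ^ 2) := by
  fun_prop

lemma sqCost_convFst_le (γ : Measure (E × E)) [IsProbabilityMeasure γ] (ρ : Measure E)
    [IsProbabilityMeasure ρ] {δ : ℝ} (hδ : 0 ≤ δ) (hρ : ρ (closedBall 0 δ)ᶜ = 0)
    (h₁ : Integrable (fun p ↦ ‖p.1‖) γ) (h₂ : Integrable (fun p ↦ ‖p.2‖) γ) :
    sqCost (convFst γ ρ) ≤
      sqCost γ + ENNReal.ofReal ((2 * (∫ p, ‖p.1‖ ∂γ + ∫ p, ‖p.2‖ ∂γ) + δ) * δ) := by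
  set excess : E × E → ℝ := fun p ↦ (2 * (‖p.1‖ + ‖p.2‖) + δ) * δ
  have h_small : ∀ᵐ q ∂(γ.prod ρ), ‖q.2‖ ≤ δ := by
    refine measurePreserving_snd.quasiMeasurePreserving.ae (p := fun z : E ↦ ‖z‖ ≤ δ) ?_
    rw [ae_iff]
    convert hρ using 2
    ext z
    simp
  have h_excess : Integrable excess γ :=
    (((h₁.add h₂).const_mul 2).add (integrable_const δ)).mul_const δ
  have h_excess_meas : Measurable fun p ↦ ENNReal.ofReal (excess p) := by
    simp only [excess]; fun_prop
  have h_int : ∫ p, excess p ∂γ = (2 * (∫ p, ‖p.1‖ ∂γ + ∫ p, ‖p.2‖ ∂γ) + δ) * δ := by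
    rw [integral_mul_const, integral_add (f := fun p : E × E ↦ 2 * (‖p.1‖ + ‖p.2‖))
        ((h₁.add h₂).const_mul 2) (integrable_const δ),
      integral_const_mul, integral_add h₁ h₂, integral_const, probReal_univ, one_smul]
  calc sqCost (convFst γ ρ)
      = ∫⁻ q, ENNReal.ofReal (‖q.1.1 + q.2 - q.1.2‖ ^ 2) ∂(γ.prod ρ) :=
        lintegral_map measurable_sqCost_integrand (by fun_prop)
    _ ≤ ∫⁻ q, ENNReal.ofReal (‖q.1.1 - q.1.2‖ ^ 2) + ENNReal.ofReal (excess q.1) ∂(γ.prod ρ) :=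
        lintegral_mono_ae <| h_small.mono fun q hq ↦
          (ofReal_le_ofReal (norm_add_sub_sq_le hq)).trans ofReal_add_le
    _ = ∫⁻ p, ENNReal.ofReal (‖p.1 - p.2‖ ^ 2) + ENNReal.ofReal (excess p) ∂γ :=
        measurePreserving_fst.lintegral_comp (measurable_sqCost_integrand.add h_excess_meas)
    _ = sqCost γ + ENNReal.ofReal ((2 * (∫ p, ‖p.1‖ ∂γ + ∫ p, ‖p.2‖ ∂γ) + δ) * δ) := by
        rw [lintegral_add_left measurable_sqCost_integrand, ← h_int,
          ofReal_integral_eq_lintegral_ofReal h_excess (ae_of_all _ fun p ↦ by positivity),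
          sqCost]

lemma eW2sq_conv_le {μ ν ρ : Measure E} [IsProbabilityMeasure μ] [IsProbabilityMeasure ρ]
    (hμ : Integrable (‖·‖) μ) (hν : Integrable (‖·‖) ν) {δ : ℝ} (hδ : 0 ≤ δ)
    (hρ : ρ (closedBall 0 δ)ᶜ = 0) :
    eW2sq (μ ∗ ρ) ν ≤
      eW2sq μ ν + ENNReal.ofReal ((2 * (∫ x, ‖x‖ ∂μ + ∫ y, ‖y‖ ∂ν) + δ) * δ) := by
  rw [eW2sq, eW2sq, ENNReal.iInf_add]
  refine le_iInf fun ⟨γ, h₁, h₂⟩ ↦ ?_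
  have : IsProbabilityMeasure (γ.map Prod.fst) := h₁ ▸ inferInstance
  have : IsProbabilityMeasure γ := isProbabilityMeasure_of_map Prod.fst
  have e₁ : ∫ p, ‖p.1‖ ∂γ = ∫ x, ‖x‖ ∂μ := by
    rw [← h₁, integral_map measurable_fst.aemeasurable continuous_norm.aestronglyMeasurable]
  have e₂ : ∫ p, ‖p.2‖ ∂γ = ∫ y, ‖y‖ ∂ν := by
    rw [← h₂, integral_map measurable_snd.aemeasurable continuous_norm.aestronglyMeasurable]
  calc eW2sq (μ ∗ ρ) ν ≤ sqCost (convFst γ ρ) :=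
        eW2sq_le_sqCost (by rw [map_fst_convFst, h₁]) (by rw [map_snd_convFst, h₂])
    _ ≤ _ := e₁ ▸ e₂ ▸ sqCost_convFst_le γ ρ hδ hρ
        ((MeasurePreserving.mk measurable_fst h₁).integrable_comp_of_integrable hμ)
        ((MeasurePreserving.mk measurable_snd h₂).integrable_comp_of_integrable hν)

end Transport

/-- Perturbation of the Wasserstein distance by convolution with a measure supported in
`B(0,δ)`: `W₂²(μ∗ρ, ν) ≤ W₂²(μ, ν) + (2(E|X| + E|Y|) + δ)δ`. -/
theorem W2sq_conv_le (d : ℕ) (μ ν ρ : Measure (EuclideanSpace ℝ (Fin d)))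
    (hμ : IsProbabilityMeasure μ) (hν : IsProbabilityMeasure ν)
    (hρ : IsProbabilityMeasure ρ)
    (hμ2 : Integrable (fun x => ‖x‖ ^ 2) μ) (hν2 : Integrable (fun x => ‖x‖ ^ 2) ν)
    (δ : ℝ) (hδ : 0 ≤ δ)
    (hρsupp : ρ (Metric.closedBall (0 : EuclideanSpace ℝ (Fin d)) δ)ᶜ = 0) :
    W2sq ((μ.prod ρ).map fun p => p.1 + p.2) ν ≤
      W2sq μ ν + (2 * ((∫ x, ‖x‖ ∂μ) + ∫ y, ‖y‖ ∂ν) + δ) * δ := by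
  have hμ₂ : MemLp id 2 μ := (memLp_two_iff_integrable_sq_norm aestronglyMeasurable_id).2 hμ2
  have hν₂ : MemLp id 2 ν := (memLp_two_iff_integrable_sq_norm aestronglyMeasurable_id).2 hν2
  have h_fin : eW2sq μ ν ≠ ∞ := eW2sq_ne_top hμ₂ hν₂
  have h_excess : 0 ≤ (2 * ((∫ x, ‖x‖ ∂μ) + ∫ y, ‖y‖ ∂ν) + δ) * δ := by positivity
  calc W2sq ((μ.prod ρ).map fun p => p.1 + p.2) ν = (eW2sq (μ ∗ ρ) ν).toReal := rfl
    _ ≤ (eW2sq μ ν + ENNReal.ofReal ((2 * ((∫ x, ‖x‖ ∂μ) + ∫ y, ‖y‖ ∂ν) + δ) * δ)).toReal :=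
        toReal_mono (add_ne_top.2 ⟨h_fin, ofReal_ne_top⟩) <| eW2sq_conv_le
          (hμ₂.integrable one_le_two).norm (hν₂.integrable one_le_two).norm hδ hρsupp
    _ = W2sq μ ν + (2 * ((∫ x, ‖x‖ ∂μ) + ∫ y, ‖y‖ ∂ν) + δ) * δ := by
        rw [toReal_add h_fin ofReal_ne_top, toReal_ofReal h_excess]
        rfl
end

section
/- Let V be convex, differentiable on ℝ^d, and λ-strongly convex outside the ball B(0,R), λ ≥ 0. Let X_{k+1/3} = prox_V^τ(X_k) for a random variable X_k. Then for any m ≥ 0 and τ > 0: E|X_{k+1/3}|^m ≤ (1/(1+τλ))^{m/2}·E|X_k|^m + ((1+τλ)^{m/2}−1)/(1+τλ)^{m/2}·R^m. -/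
/-!
The first-order condition at `y = prox_V^τ(x)` reads `τ ∇V(y) = x - y`. Comparing `V` at `y` with
its minimiser `0` through the growth inequality gives `⟪∇V(y), y⟫ ≥ (λ/2) ‖y‖²` outside `B(0,R)`
(and `≥ 0` inside), so expanding `‖x‖² = ‖x - y‖² + 2⟪x - y, y⟫ + ‖y‖²` yields
`(1 + τλ) ‖y‖² ≤ ‖x‖²` outside the ball and `‖y‖ ≤ min ‖x‖ R` inside. With
`c = (1 + τλ)^(-m/2)` both cases give `‖y‖^m ≤ c ‖x‖^m + (1 - c) R^m`, which is then integrated.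
-/

open MeasureTheory
open scoped RealInnerProductSpace Classical

variable {E : Type*} [NormedAddCommGroup E] [InnerProductSpace ℝ E]

/-- `y` is a value of `prox_f^τ(x)`. -/
def IsProxPoint (f : E → ℝ) (τ : ℝ) (x y : E) : Prop :=
  ∀ z, f y + ‖y - x‖ ^ 2 / (2 * τ) ≤ f z + ‖z - x‖ ^ 2 / (2 * τ)

theorem IsProxPoint.smul_gradient_eq [CompleteSpace E] {f : E → ℝ} {f' x y : E} {τ : ℝ}
    (h : IsProxPoint f τ x y) (hτ : τ ≠ 0) (hf : HasGradientAt f f' y) :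
    τ • f' = x - y := by
  have hderiv :=
    hf.hasFDerivAt.add ((hasFDerivAt_sub_const (𝕜 := ℝ) x).norm_sq.const_mul (2 * τ)⁻¹)
  have hmin : IsLocalMin (fun z => f z + (2 * τ)⁻¹ * ‖z - x‖ ^ 2) y :=
    .of_forall fun z => by simpa only [div_eq_inv_mul] using h z
  have hcrit := hmin.hasFDerivAt_eq_zero hderiv
  refine ext_inner_right ℝ fun v => ?_
  have hv := congrArg (fun L => L v) hcrit
  simp only [map_sub, ContinuousLinearMap.comp_id, add_apply,
    InnerProductSpace.toDual_apply_apply, smul_apply, sub_apply, coe_innerSL_apply, nsmul_eq_mul,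
    Nat.cast_ofNat, smul_eq_mul, zero_apply] at hv
  rw [real_inner_smul_left, inner_sub_left]
  field_simp at hv
  linarith

theorem one_add_two_mul_sq_norm_le_of_mul_sq_norm_le_inner {x y : E} {μ : ℝ}
    (h : μ * ‖y‖ ^ 2 ≤ ⟪x - y, y⟫) : (1 + 2 * μ) * ‖y‖ ^ 2 ≤ ‖x‖ ^ 2 := by
  have hexpand : ‖x‖ ^ 2 = ‖x - y‖ ^ 2 + 2 * ⟪x - y, y⟫ + ‖y‖ ^ 2 := by
    simpa using norm_add_sq_real (x - y) y
  nlinarith [sq_nonneg ‖x - y‖]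

theorem IsProxPoint.one_add_mul_sq_norm_le [CompleteSpace E] {f : E → ℝ} {f' x y : E}
    {τ μ : ℝ} (h : IsProxPoint f τ x y) (hτ : 0 < τ) (hf : HasGradientAt f f' y)
    (hmin : f 0 ≤ f y) (hgrowth : f y + ⟪f', 0 - y⟫ + μ * ‖0 - y‖ ^ 2 ≤ f 0) :
    (1 + 2 * (τ * μ)) * ‖y‖ ^ 2 ≤ ‖x‖ ^ 2 := by
  refine one_add_two_mul_sq_norm_le_of_mul_sq_norm_le_inner ?_
  rw [zero_sub, inner_neg_right, norm_neg] at hgrowth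
  rw [← h.smul_gradient_eq hτ.ne' hf, real_inner_smul_left, mul_assoc]
  exact mul_le_mul_of_nonneg_left (by linarith) hτ.le

theorem rpow_le_mul_rpow_add_mul_rpow_of_le {a b R c m : ℝ} (hb : 0 ≤ b) (hm : 0 ≤ m)
    (hc₀ : 0 ≤ c) (hc₁ : c ≤ 1) (hba : b ≤ a) (hbR : b ≤ R) :
    b ^ m ≤ c * a ^ m + (1 - c) * R ^ m := by
  have ha : b ^ m ≤ a ^ m := Real.rpow_le_rpow hb hba hm
  have hR : b ^ m ≤ R ^ m := Real.rpow_le_rpow hb hbR hm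
  nlinarith

theorem rpow_le_one_div_rpow_mul_rpow_of_mul_sq_le {a b A m : ℝ} (ha : 0 ≤ a) (hb : 0 ≤ b)
    (hA : 0 < A) (hm : 0 ≤ m) (h : A * b ^ 2 ≤ a ^ 2) :
    b ^ m ≤ (1 / A) ^ (m / 2) * a ^ m := by
  have hsq : b ^ 2 ≤ 1 / A * a ^ 2 := by
    rw [one_div_mul_eq_div, le_div_iff₀ hA]; linarith
  calc b ^ m = (b ^ 2) ^ (m / 2) := by
        rw [← Real.rpow_natCast, ← Real.rpow_mul hb, Nat.cast_ofNat, mul_div_cancel₀ m two_ne_zero]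
    _ ≤ (1 / A * a ^ 2) ^ (m / 2) := Real.rpow_le_rpow (by positivity) hsq (by positivity)
    _ = (1 / A) ^ (m / 2) * a ^ m := by
        rw [Real.mul_rpow (by positivity) (by positivity), ← Real.rpow_natCast,
          ← Real.rpow_mul ha, Nat.cast_ofNat, mul_div_cancel₀ m two_ne_zero]

theorem integral_le_mul_integral_add_of_ae_le {Ω : Type*} [MeasurableSpace Ω] {P : Measure Ω}
    [IsProbabilityMeasure P] {f g : Ω → ℝ} {c b : ℝ} (hf : Integrable f P)
    (hg : Integrable g P) (h : ∀ᵐ ω ∂P, f ω ≤ c * g ω + b) :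
    ∫ ω, f ω ∂P ≤ c * ∫ ω, g ω ∂P + b := by
  calc ∫ ω, f ω ∂P ≤ ∫ ω, (c * g ω + b) ∂P :=
        integral_mono_ae hf ((hg.const_mul c).add (integrable_const b)) h
    _ = c * ∫ ω, g ω ∂P + b := by
        rw [integral_add (hg.const_mul c) (integrable_const b), integral_const_mul]
        simp

theorem IsProxPoint.rpow_norm_le [CompleteSpace E] {f : E → ℝ} {f' x y : E} {τ lam R m : ℝ}
    (h : IsProxPoint f τ x y) (hτ : 0 < τ) (hf : HasGradientAt f f' y) (hmin : f 0 ≤ f y)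
    (hlam : 0 ≤ lam) (hR : 0 ≤ R) (hm : 0 ≤ m)
    (hgrowth : f y + ⟪f', 0 - y⟫ +
      lam / 2 * (if y ∈ Metric.ball 0 R then (0 : ℝ) else 1) * ‖0 - y‖ ^ 2 ≤ f 0) :
    ‖y‖ ^ m ≤ (1 / (1 + τ * lam)) ^ (m / 2) * ‖x‖ ^ m +
      (1 - (1 / (1 + τ * lam)) ^ (m / 2)) * R ^ m := by
  have hA : 1 ≤ 1 + τ * lam := le_add_of_nonneg_right (mul_nonneg hτ.le hlam)
  have hc₁ : (1 / (1 + τ * lam)) ^ (m / 2) ≤ 1 :=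
    Real.rpow_le_one (by positivity) (div_le_one_of_le₀ hA (by linarith)) (by positivity)
  have hshrink := h.one_add_mul_sq_norm_le hτ hf hmin hgrowth
  by_cases hball : y ∈ Metric.ball 0 R
  · rw [if_pos hball] at hshrink
    refine rpow_le_mul_rpow_add_mul_rpow_of_le (norm_nonneg y) hm (by positivity) hc₁ ?_
      (mem_ball_zero_iff.mp hball).le
    exact (pow_le_pow_iff_left₀ (norm_nonneg y) (norm_nonneg x) two_ne_zero).mp (by linarith)
  · rw [if_neg hball] at hshrink
    have hRm : 0 ≤ (1 - (1 / (1 + τ * lam)) ^ (m / 2)) * R ^ m :=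
      mul_nonneg (by linarith) (Real.rpow_nonneg hR m)
    have hcontract := rpow_le_one_div_rpow_mul_rpow_of_mul_sq_le (norm_nonneg x) (norm_nonneg y)
      (by linarith) hm (by linarith : (1 + τ * lam) * ‖y‖ ^ 2 ≤ ‖x‖ ^ 2)
    linarith

theorem prox_moment_bound_general (d : ℕ)
    (V : EuclideanSpace ℝ (Fin d) → ℝ)
    (V' : EuclideanSpace ℝ (Fin d) → EuclideanSpace ℝ (Fin d))
    (lam R : ℝ) (hlam : 0 ≤ lam) (hR : 0 ≤ R)
    (hdiff : ∀ x, HasGradientAt V (V' x) x)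
    (hconvOut : ∀ x y, V x ≥ V y + ⟪V' y, x - y⟫ +
      lam / 2 * (if y ∈ Metric.ball (0 : EuclideanSpace ℝ (Fin d)) R then (0 : ℝ) else 1) *
        ‖x - y‖ ^ 2)
    (hminV : ∀ y, V 0 ≤ V y)
    (τ : ℝ) (hτ : 0 < τ)
    (prox : EuclideanSpace ℝ (Fin d) → EuclideanSpace ℝ (Fin d))
    (hprox : ∀ x y, V (prox x) + ‖prox x - x‖ ^ 2 / (2 * τ) ≤ V y + ‖y - x‖ ^ 2 / (2 * τ))
    (Ω : Type) (mΩ : MeasurableSpace Ω) (P : Measure Ω) (hP : IsProbabilityMeasure P)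
    (X : Ω → EuclideanSpace ℝ (Fin d))
    (m : ℝ) (hm : 0 ≤ m)
    (hXm : Integrable (fun ω => ‖X ω‖ ^ m) P)
    (hproxm : Integrable (fun ω => ‖prox (X ω)‖ ^ m) P) :
    (∫ ω, ‖prox (X ω)‖ ^ m ∂P) ≤
      (1 / (1 + τ * lam)) ^ (m / 2) * (∫ ω, ‖X ω‖ ^ m ∂P) +
        ((1 + τ * lam) ^ (m / 2) - 1) / (1 + τ * lam) ^ (m / 2) * R ^ m := by
  have hpointwise (x : EuclideanSpace ℝ (Fin d)) := IsProxPoint.rpow_norm_le (hprox x) hτ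
    (hdiff (prox x)) (hminV _) hlam hR hm (hconvOut 0 (prox x))
  have hcoeff : 1 - (1 / (1 + τ * lam)) ^ (m / 2) =
      ((1 + τ * lam) ^ (m / 2) - 1) / (1 + τ * lam) ^ (m / 2) := by
    have hpos : 0 < (1 + τ * lam) ^ (m / 2) := by positivity
    rw [Real.div_rpow zero_le_one (by positivity), Real.one_rpow]
    field_simp
  rw [← hcoeff]
  exact integral_le_mul_integral_add_of_ae_le hproxm hXm (ae_of_all _ fun ω => hpointwise (X ω))

/-- Moment bound for the (exact) proximal step: if `V` is convex, differentiable, λ-strongly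
convex outside `B(0,R)`, with minimum at `0`, then
`E|prox_V^τ(X)|^m ≤ (1/(1+τλ))^{m/2} E|X|^m + ((1+τλ)^{m/2}−1)/(1+τλ)^{m/2} R^m`. -/
theorem prox_moment_bound (d : ℕ)
    (V : EuclideanSpace ℝ (Fin d) → ℝ)
    (V' : EuclideanSpace ℝ (Fin d) → EuclideanSpace ℝ (Fin d))
    (lam R : ℝ) (hlam : 0 ≤ lam) (hR : 0 ≤ R)
    (hdiff : ∀ x, HasGradientAt V (V' x) x)
    (hconv : ConvexOn ℝ Set.univ V)
    (hconvOut : ∀ x y, V x ≥ V y + ⟪V' y, x - y⟫ +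
      lam / 2 * (if y ∈ Metric.ball (0 : EuclideanSpace ℝ (Fin d)) R then (0 : ℝ) else 1) *
        ‖x - y‖ ^ 2)
    (hminV : ∀ y, V 0 ≤ V y)
    (τ : ℝ) (hτ : 0 < τ)
    (prox : EuclideanSpace ℝ (Fin d) → EuclideanSpace ℝ (Fin d))
    (hprox : ∀ x y, V (prox x) + ‖prox x - x‖ ^ 2 / (2 * τ) ≤ V y + ‖y - x‖ ^ 2 / (2 * τ))
    (Ω : Type) (mΩ : MeasurableSpace Ω) (P : Measure Ω) (hP : IsProbabilityMeasure P)
    (X : Ω → EuclideanSpace ℝ (Fin d)) (hX : AEMeasurable X P)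
    (m : ℝ) (hm : 0 ≤ m)
    (hXm : Integrable (fun ω => ‖X ω‖ ^ m) P)
    (hproxm : Integrable (fun ω => ‖prox (X ω)‖ ^ m) P) :
    (∫ ω, ‖prox (X ω)‖ ^ m ∂P) ≤
      (1 / (1 + τ * lam)) ^ (m / 2) * (∫ ω, ‖X ω‖ ^ m ∂P) +
        ((1 + τ * lam) ^ (m / 2) - 1) / (1 + τ * lam) ^ (m / 2) * R ^ m :=
  prox_moment_bound_general d V V' lam R hlam hR hdiff hconvOut hminV τ hτ prox hprox Ω mΩ P hP X m
    hm hXm hproxm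
end
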